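/- Let X be a W-hyperbolic space, C ⊆ X convex, T : C → C nonexpansive with fixed point p, u, x₀ ∈ C, λ ∈ (0,1], β₁ = 0, βₙ = 1 − 2/n for n ≥ 2 (β₀ arbitrary in [0,1]). Define the Tikhonov-Mann iteration uₙ = (1−βₙ)u + βₙxₙ, x_{n+1} = (1−λ)uₙ + λT(uₙ). If K ∈ ℕ, K ≥ 1, K ≥ max{d(x₀,p), d(u,p)}, then for all n ≥ 1: d(x_{n+1}, xₙ) ≤ 4K/n and d(xₙ, T xₙ) ≤ 8K/(λn). -/

import Mathlib

/-!
Every point of the iteration stays in the closed ball of radius `K` about the fixed point `p`,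
so `d(u, xₙ) ≤ 2K`. Combining (W2) and (W4) with the nonexpansiveness of the Mann step
`y ↦ (1 - λ) y + λ T y` gives the recurrence
`d(x_{n+2}, x_{n+1}) ≤ |β_{n+1} - β_n| · 2K + β_n · d(x_{n+1}, x_n)`,
whose solution for `βₙ = 1 - 2/n` is `4K/n`. Finally (W1) gives
`λ · d(xₙ, T xₙ) ≤ d(x_{n+1}, xₙ) + d(xₙ, uₙ)`, and `d(xₙ, uₙ) ≤ (1 - βₙ) · 2K ≤ 4K/n`.
-/

open Set

namespace WHyperbolic

variable {X : Type*}

section Metric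

variable [MetricSpace X]

def W1 (W : X → X → ℝ → X) : Prop :=
  ∀ x y z : X, ∀ l ∈ Icc (0:ℝ) 1, dist z (W x y l) ≤ (1 - l) * dist z x + l * dist z y

def W2 (W : X → X → ℝ → X) : Prop :=
  ∀ x y : X, ∀ l ∈ Icc (0:ℝ) 1, ∀ m ∈ Icc (0:ℝ) 1, dist (W x y l) (W x y m) = |l - m| * dist x y

def W4 (W : X → X → ℝ → X) : Prop :=
  ∀ x y z w : X, ∀ l ∈ Icc (0:ℝ) 1,
    dist (W x z l) (W y w l) ≤ (1 - l) * dist x y + l * dist z w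

variable {W : X → X → ℝ → X}

theorem dist_W_le_of_le (hW1 : W1 W) {x y z : X} {l r : ℝ} (hl : l ∈ Icc (0:ℝ) 1)
    (hx : dist z x ≤ r) (hy : dist z y ≤ r) : dist z (W x y l) ≤ r :=
  calc dist z (W x y l) ≤ (1 - l) * dist z x + l * dist z y := hW1 x y z l hl
    _ ≤ (1 - l) * r + l * r := by gcongr <;> linarith [hl.2, hl.1]
    _ = r := by ring

theorem dist_W_right_le (hW1 : W1 W) (x y : X) {l : ℝ} (hl : l ∈ Icc (0:ℝ) 1) :
    dist y (W x y l) ≤ (1 - l) * dist y x := by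
  simpa using hW1 x y y l hl

theorem dist_W_W_le (hW2 : W2 W) (hW4 : W4 W) (x y z : X) {l m : ℝ}
    (hl : l ∈ Icc (0:ℝ) 1) (hm : m ∈ Icc (0:ℝ) 1) :
    dist (W x y l) (W x z m) ≤ |l - m| * dist x y + m * dist y z := by
  have hym : dist (W x y m) (W x z m) ≤ m * dist y z := by simpa using hW4 x x y z m hm
  calc dist (W x y l) (W x z m) ≤ dist (W x y l) (W x y m) + dist (W x y m) (W x z m) :=
        dist_triangle _ _ _
    _ ≤ |l - m| * dist x y + m * dist y z := by rw [hW2 x y l hl m hm]; gcongr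

theorem dist_W_map_le (hW4 : W4 W) {C : Set X} {T : X → X} (hT : LipschitzOnWith 1 T C)
    {a b : X} (ha : a ∈ C) (hb : b ∈ C) {l : ℝ} (hl : l ∈ Icc (0:ℝ) 1) :
    dist (W a (T a) l) (W b (T b) l) ≤ dist a b := by
  have hTab : dist (T a) (T b) ≤ dist a b := by simpa using hT.dist_le_mul a ha b hb
  calc dist (W a (T a) l) (W b (T b) l) ≤ (1 - l) * dist a b + l * dist (T a) (T b) :=
        hW4 _ _ _ _ l hl
    _ ≤ (1 - l) * dist a b + l * dist a b := by gcongr; exact hl.1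
    _ = dist a b := by ring

theorem mul_dist_map_le (hW1 : W1 W) {C : Set X} {T : X → X} (hT : LipschitzOnWith 1 T C)
    {a b : X} (ha : a ∈ C) (hb : b ∈ C) {l : ℝ} (hl : l ∈ Icc (0:ℝ) 1) :
    l * dist a (T a) ≤ dist (W b (T b) l) a + dist a b := by
  have hTW : dist (T a) (W b (T b) l) ≤ (1 - l) * dist (T a) b + l * dist (T a) (T b) :=
    hW1 _ _ _ l hl
  have hTT : dist (T a) (T b) ≤ dist a b := by simpa using hT.dist_le_mul a ha b hb
  have hTb : dist (T a) b ≤ dist a (T a) + dist a b := dist_triangle_left _ _ _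
  have haT : dist a (T a) ≤ dist (W b (T b) l) a + dist (T a) (W b (T b) l) := by
    rw [dist_comm (T a)]; exact dist_triangle_left _ _ _
  nlinarith [hl.1, hl.2]

end Metric

section TikhonovMann

variable {W : X → X → ℝ → X} {C : Set X} {T : X → X} {u p : X} {lam : ℝ} {β : ℕ → ℝ}
  {x uu : ℕ → X}

theorem tikhonovMann_mem (hC : ∀ x ∈ C, ∀ y ∈ C, ∀ l ∈ Icc (0:ℝ) 1, W x y l ∈ C)
    (hT : MapsTo T C C) (hu : u ∈ C) (hx0 : x 0 ∈ C) (hβ : ∀ n, β n ∈ Icc (0:ℝ) 1)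
    (hlam : lam ∈ Icc (0:ℝ) 1) (huu : ∀ n, uu n = W u (x n) (β n))
    (hxrec : ∀ n, x (n + 1) = W (uu n) (T (uu n)) lam) (n : ℕ) : x n ∈ C ∧ uu n ∈ C := by
  have huuC {n : ℕ} (hxn : x n ∈ C) : uu n ∈ C := huu n ▸ hC _ hu _ hxn _ (hβ n)
  induction n with
  | zero => exact ⟨hx0, huuC hx0⟩
  | succ n ih =>
    have hxn : x (n + 1) ∈ C := hxrec n ▸ hC _ ih.2 _ (hT ih.2) _ hlam
    exact ⟨hxn, huuC hxn⟩

variable [MetricSpace X]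

theorem tikhonovMann_dist_le (hW1 : W1 W) (hT : LipschitzOnWith 1 T C) (hp : p ∈ C)
    (hfix : T p = p) (huuC : ∀ n, uu n ∈ C) (hβ : ∀ n, β n ∈ Icc (0:ℝ) 1)
    (hlam : lam ∈ Icc (0:ℝ) 1) (huu : ∀ n, uu n = W u (x n) (β n))
    (hxrec : ∀ n, x (n + 1) = W (uu n) (T (uu n)) lam) {K : ℝ} (hu : dist p u ≤ K)
    (hx0 : dist p (x 0) ≤ K) (n : ℕ) : dist p (x n) ≤ K := by
  induction n with
  | zero => exact hx0
  | succ n ih =>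
    have hpuu : dist p (uu n) ≤ K := huu n ▸ dist_W_le_of_le hW1 (hβ n) hu ih
    have hpTuu : dist p (T (uu n)) ≤ K := by
      rw [← hfix]
      exact (by simpa using hT.dist_le_mul p hp _ (huuC n) : _ ≤ _).trans hpuu
    exact hxrec n ▸ dist_W_le_of_le hW1 hlam hpuu hpTuu

theorem tikhonovMann_dist_succ_le (hW2 : W2 W) (hW4 : W4 W) (hT : LipschitzOnWith 1 T C)
    (huuC : ∀ n, uu n ∈ C) (hβ : ∀ n, β n ∈ Icc (0:ℝ) 1) (hlam : lam ∈ Icc (0:ℝ) 1)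
    (huu : ∀ n, uu n = W u (x n) (β n)) (hxrec : ∀ n, x (n + 1) = W (uu n) (T (uu n)) lam)
    {R : ℝ} (hux : ∀ n, dist u (x n) ≤ R) (n : ℕ) :
    dist (x (n + 2)) (x (n + 1)) ≤ |β (n + 1) - β n| * R + β n * dist (x (n + 1)) (x n) :=
  calc dist (x (n + 2)) (x (n + 1)) ≤ dist (uu (n + 1)) (uu n) := by
        rw [hxrec, hxrec]; exact dist_W_map_le hW4 hT (huuC _) (huuC _) hlam
    _ ≤ |β (n + 1) - β n| * dist u (x (n + 1)) + β n * dist (x (n + 1)) (x n) := by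
        rw [huu, huu]; exact dist_W_W_le hW2 hW4 _ _ _ (hβ _) (hβ _)
    _ ≤ |β (n + 1) - β n| * R + β n * dist (x (n + 1)) (x n) := by gcongr; exact hux _

end TikhonovMann

section StepSizes

variable {β : ℕ → ℝ}

theorem one_sub_le_two_div (hβ1 : β 1 = 0) (hβn : ∀ n, 2 ≤ n → β n = 1 - 2 / (n : ℝ))
    {n : ℕ} (hn : 1 ≤ n) : 1 - β n ≤ 2 / n := by
  rcases hn.eq_or_lt with rfl | hn
  · norm_num [hβ1]
  · rw [hβn n hn]; simp

/-- `2c/n` is a supersolution of the recurrence: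
`(2/n - 2/(n+1)) c + (1 - 2/n)(2c/n) = 2c/(n+1) - 4c/(n²(n+1))`. -/
theorem le_two_mul_div_of_le_abs_sub_mul_add (hβ1 : β 1 = 0)
    (hβn : ∀ n, 2 ≤ n → β n = 1 - 2 / (n : ℝ)) {a : ℕ → ℝ} {c : ℝ} (hc : 0 ≤ c)
    (ha1 : a 1 ≤ 2 * c) (ha : ∀ n, 1 ≤ n → a (n + 1) ≤ |β (n + 1) - β n| * c + β n * a n)
    {n : ℕ} (hn : 1 ≤ n) : a n ≤ 2 * c / n := by
  induction n, hn using Nat.le_induction with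
  | base => simpa using ha1
  | succ n hn ih =>
    rcases hn.eq_or_lt with rfl | hn2
    · have := ha 1 le_rfl
      norm_num [hβ1, hβn 2 le_rfl] at this ⊢
      linarith
    · have hN : (2:ℝ) ≤ n := by exact_mod_cast hn2
      have habs : |β (n + 1) - β n| = 2 / n - 2 / (n + 1) := by
        rw [hβn n hn2, hβn (n + 1) (by omega), abs_of_nonneg]
        · push_cast; ring
        · push_cast
          have : 2 / ((n:ℝ) + 1) ≤ 2 / n := by gcongr; linarith
          linarith
      have hβ0 : 0 ≤ 1 - 2 / (n:ℝ) := by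
        rw [sub_nonneg, div_le_one (by positivity)]; exact hN
      have key : 2 * c / (n + 1) - ((2 / n - 2 / (n + 1)) * c + (1 - 2 / n) * (2 * c / n)) =
          4 * c / (n ^ 2 * (n + 1)) := by
        field_simp; ring
      have := ha n hn
      rw [habs, hβn n hn2] at this
      push_cast
      nlinarith [mul_le_mul_of_nonneg_left ih hβ0, div_nonneg (mul_nonneg zero_le_four hc)
        (by positivity : (0:ℝ) ≤ n ^ 2 * (n + 1))]

end StepSizes

end WHyperbolic

open WHyperbolic in
theorem tikhonovMann_linear_rate_general {X : Type*} [MetricSpace X] (W : X → X → ℝ → X)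
    (W1 : ∀ x y z : X, ∀ l ∈ Set.Icc (0:ℝ) 1,
      dist z (W x y l) ≤ (1 - l) * dist z x + l * dist z y)
    (W2 : ∀ x y : X, ∀ l ∈ Set.Icc (0:ℝ) 1, ∀ m ∈ Set.Icc (0:ℝ) 1,
      dist (W x y l) (W x y m) = |l - m| * dist x y)
    (W4 : ∀ x y z w : X, ∀ l ∈ Set.Icc (0:ℝ) 1,
      dist (W x z l) (W y w l) ≤ (1 - l) * dist x y + l * dist z w)
    (C : Set X) (hC : ∀ x ∈ C, ∀ y ∈ C, ∀ l ∈ Set.Icc (0:ℝ) 1, W x y l ∈ C)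
    (T : X → X) (hT : ∀ x ∈ C, T x ∈ C)
    (hTne : ∀ x ∈ C, ∀ y ∈ C, dist (T x) (T y) ≤ dist x y)
    (p : X) (hp : p ∈ C) (hfix : T p = p)
    (u x0 : X) (hu : u ∈ C) (hx0 : x0 ∈ C)
    (lam : ℝ) (hlam : 0 < lam ∧ lam ≤ 1)
    (β : ℕ → ℝ) (hβ : ∀ n, β n ∈ Set.Icc (0:ℝ) 1)
    (hβ1 : β 1 = 0) (hβn : ∀ n, 2 ≤ n → β n = 1 - 2 / (n : ℝ))
    (x uu : ℕ → X) (hx0' : x 0 = x0)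
    (huu : ∀ n, uu n = W u (x n) (β n))
    (hxrec : ∀ n, x (n + 1) = W (uu n) (T (uu n)) lam)
    (K : ℕ) (hK : max (dist x0 p) (dist u p) ≤ (K : ℝ)) :
    ∀ n : ℕ, 1 ≤ n → dist (x (n + 1)) (x n) ≤ 4 * K / n ∧
      dist (x n) (T (x n)) ≤ 8 * K / (lam * n) := by
  have hlamI : lam ∈ Icc (0:ℝ) 1 := ⟨hlam.1.le, hlam.2⟩
  have hTL : LipschitzOnWith 1 T C := LipschitzOnWith.mk_one hTne
  have hmem := tikhonovMann_mem hC hT hu (hx0' ▸ hx0) hβ hlamI huu hxrec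
  have huuC n := (hmem n).2
  have hpu : dist p u ≤ K := dist_comm u p ▸ le_of_max_le_right hK
  have hpx := tikhonovMann_dist_le W1 hTL hp hfix huuC hβ hlamI huu hxrec hpu
    (hx0' ▸ dist_comm x0 p ▸ le_of_max_le_left hK)
  have hux n : dist u (x n) ≤ 2 * K :=
    (dist_triangle_left u (x n) p).trans (by linarith [hpx n])
  have hrate n (hn : 1 ≤ n) : dist (x (n + 1)) (x n) ≤ 4 * K / n := by
    have hstart : dist (x 2) (x 1) ≤ 2 * (2 * K) :=
      (dist_triangle_left _ _ p).trans (by linarith [hpx 1, hpx 2])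
    calc dist (x (n + 1)) (x n) ≤ 2 * (2 * K) / n :=
          le_two_mul_div_of_le_abs_sub_mul_add (a := fun n => dist (x (n + 1)) (x n))
            hβ1 hβn (by positivity) hstart
            (fun n _ => tikhonovMann_dist_succ_le W2 W4 hTL huuC hβ hlamI huu hxrec hux n) hn
      _ = 4 * K / n := by ring
  have hxuu n (hn : 1 ≤ n) : dist (x n) (uu n) ≤ 4 * K / n :=
    calc dist (x n) (uu n) ≤ (1 - β n) * dist (x n) u := huu n ▸ dist_W_right_le W1 u _ (hβ n)
      _ ≤ 2 / n * (2 * K) := by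
          gcongr
          exacts [one_sub_le_two_div hβ1 hβn hn, dist_comm u (x n) ▸ hux n]
      _ = 4 * K / n := by ring
  intro n hn
  refine ⟨hrate n hn, ?_⟩
  rw [mul_comm lam, ← div_div, le_div_iff₀' hlam.1]
  calc lam * dist (x n) (T (x n)) ≤ dist (x (n + 1)) (x n) + dist (x n) (uu n) :=
        hxrec n ▸ mul_dist_map_le W1 hTL (hmem n).1 (huuC n) hlamI
    _ ≤ 4 * K / n + 4 * K / n := add_le_add (hrate n hn) (hxuu n hn)
    _ = 8 * K / n := by ring

/-- Linear rates of asymptotic regularity for the Tikhonov-Mann iteration with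
λₙ = λ, β₁ = 0, βₙ = 1 − 2/n (n ≥ 2), in W-hyperbolic spaces. -/
theorem tikhonovMann_linear_rate {X : Type*} [MetricSpace X] (W : X → X → ℝ → X)
    (W1 : ∀ x y z : X, ∀ l ∈ Set.Icc (0:ℝ) 1,
      dist z (W x y l) ≤ (1 - l) * dist z x + l * dist z y)
    (W2 : ∀ x y : X, ∀ l ∈ Set.Icc (0:ℝ) 1, ∀ m ∈ Set.Icc (0:ℝ) 1,
      dist (W x y l) (W x y m) = |l - m| * dist x y)
    (W3 : ∀ x y : X, ∀ l ∈ Set.Icc (0:ℝ) 1, W x y l = W y x (1 - l))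
    (W4 : ∀ x y z w : X, ∀ l ∈ Set.Icc (0:ℝ) 1,
      dist (W x z l) (W y w l) ≤ (1 - l) * dist x y + l * dist z w)
    (C : Set X) (hC : ∀ x ∈ C, ∀ y ∈ C, ∀ l ∈ Set.Icc (0:ℝ) 1, W x y l ∈ C)
    (T : X → X) (hT : ∀ x ∈ C, T x ∈ C)
    (hTne : ∀ x ∈ C, ∀ y ∈ C, dist (T x) (T y) ≤ dist x y)
    (p : X) (hp : p ∈ C) (hfix : T p = p)
    (u x0 : X) (hu : u ∈ C) (hx0 : x0 ∈ C)
    (lam : ℝ) (hlam : 0 < lam ∧ lam ≤ 1)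
    (β : ℕ → ℝ) (hβ : ∀ n, β n ∈ Set.Icc (0:ℝ) 1)
    (hβ1 : β 1 = 0) (hβn : ∀ n, 2 ≤ n → β n = 1 - 2 / (n : ℝ))
    (x uu : ℕ → X) (hx0' : x 0 = x0)
    (huu : ∀ n, uu n = W u (x n) (β n))
    (hxrec : ∀ n, x (n + 1) = W (uu n) (T (uu n)) lam)
    (K : ℕ) (hK1 : 1 ≤ K) (hK : max (dist x0 p) (dist u p) ≤ (K : ℝ)) :
    ∀ n : ℕ, 1 ≤ n → dist (x (n + 1)) (x n) ≤ 4 * K / n ∧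
      dist (x n) (T (x n)) ≤ 8 * K / (lam * n) :=
  tikhonovMann_linear_rate_general W W1 W2 W4 C hC T hT hTne p hp hfix u x0 hu hx0 lam hlam β hβ hβ1
    hβn x uu hx0' huu hxrec K hK
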